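/- Let v ∈ L^∞(-1,0; L²(B(1))) satisfy the Type I condition sup_{t∈(-1,0)} (-t)‖∇v(t)‖_{L^∞(B(1))} ≤ C₀ < ∞ and suppose that for every ε > 0 there exists R̃(ε) ∈ (0,1/2] with sup_{t∈(-R̃^{5/2},0)} ∫_{B(y₀,R̃)} |v(t)|² dx ≤ ε for all y₀ ∈ B(1/2) (uniform smallness of local energy). Then for every ε > 0 there exists t₀ = t₀(ε) ∈ (-1,0) such that ‖v(t)‖_{L^∞(B(1/2))} ≤ ε(-t)^{-3/5} for all t ∈ [t₀, 0). -/

import Mathlib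

/-!
The Type I bound makes `v(t)` Lipschitz on `B(1)` with constant `C₀/(-t)`. Since some point of a
ball has `|v|²` below its average there, `|v(t,x)| ≤ C₀ r/(-t) + (⨍_{B(x,r)} |v(t)|²)^{1/2}`, and
the local energy smallness at a scale `R ≥ r` bounds the average by `ε₀/(c r³)`. With the parabolic
choice `r = δ(-t)^{2/5}` and `ε₀ = c δ³ (ε/2)²` both terms are multiples of `(-t)^{-3/5}`, and `δ`
is chosen so that `C₀ δ ≤ ε/2`. This replaces the Gagliardo–Nirenberg inequality of the paper.
-/

open MeasureTheory Metric Set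

local notation "E3" => EuclideanSpace ℝ (Fin 3)

theorem norm_le_add_sqrt_setAverage_sq {α F : Type*} [MeasurableSpace α]
    [NormedAddCommGroup F] {μ : Measure α} {s : Set α} (hμ : μ s ≠ 0) (hμ' : μ s ≠ ⊤)
    {f : α → F} (hf : IntegrableOn (fun y ↦ ‖f y‖ ^ 2) s μ) {z : F} {K : ℝ}
    (hK : ∀ y ∈ s, ‖f y - z‖ ≤ K) :
    ‖z‖ ≤ K + √(⨍ y in s, ‖f y‖ ^ 2 ∂μ) := by
  obtain ⟨y, hy, hy_le⟩ := exists_le_setAverage hμ hμ' hf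
  have hfy : ‖f y‖ ≤ √(⨍ y in s, ‖f y‖ ^ 2 ∂μ) := Real.le_sqrt_of_sq_le hy_le
  calc ‖z‖ ≤ ‖f y - z‖ + ‖f y‖ :=
        norm_le_norm_sub_add z (f y) |>.trans (by rw [norm_sub_rev])
    _ ≤ K + √(⨍ y in s, ‖f y‖ ^ 2 ∂μ) := add_le_add (hK y hy) hfy

theorem norm_le_mul_add_sqrt_setIntegral_sq_div {E F : Type*} [NormedAddCommGroup E]
    [NormedSpace ℝ E] [ProperSpace E] [MeasurableSpace E] [BorelSpace E] {μ : Measure E}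
    [μ.IsOpenPosMeasure] [IsFiniteMeasureOnCompacts μ] [NormedAddCommGroup F] [NormedSpace ℝ F]
    {f : E → F} {U : Set E} (hU : Convex ℝ U) (hf : DifferentiableOn ℝ f U) {L : ℝ}
    (hf' : ∀ y ∈ U, ‖fderivWithin ℝ f U y‖ ≤ L) {x : E} {r R A : ℝ} (hr : 0 < r)
    (hrR : r ≤ R) (hxR : closedBall x R ⊆ U)
    (hA : ∫ y in ball x R, ‖f y‖ ^ 2 ∂μ ≤ A) :
    ‖f x‖ ≤ L * r + √(A / μ.real (ball x r)) := by
  have hxU : x ∈ U := hxR (mem_closedBall_self (hr.le.trans hrR))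
  have hrR' : ball x r ⊆ ball x R := ball_subset_ball hrR
  have hintR : IntegrableOn (fun y ↦ ‖f y‖ ^ 2) (ball x R) μ :=
    ((hf.continuousOn.mono hxR).norm.pow 2).integrableOn_compact (isCompact_closedBall x R)
      |>.mono_set ball_subset_closedBall
  have hlip : ∀ y ∈ ball x r, ‖f y - f x‖ ≤ L * r := fun y hy ↦
    (hU.norm_image_sub_le_of_norm_fderivWithin_le hf hf' hxU
      (hxR (ball_subset_closedBall (hrR' hy)))).trans
      (mul_le_mul_of_nonneg_left (mem_ball_iff_norm.1 hy).le ((norm_nonneg _).trans (hf' x hxU)))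
  have hμ : μ (ball x r) ≠ 0 := (measure_ball_pos μ x hr).ne'
  refine (norm_le_add_sqrt_setAverage_sq hμ measure_ball_lt_top.ne (hintR.mono_set hrR')
    hlip).trans ?_
  rw [setAverage_eq, smul_eq_mul, inv_mul_eq_div]
  gcongr
  exact (setIntegral_mono_set hintR (.of_forall fun _ ↦ by positivity) hrR'.eventuallyLE).trans hA

theorem exists_mem_Ioc_zero_one_mul_le (C : ℝ) {ε : ℝ} (hε : 0 < ε) :
    ∃ δ ∈ Ioc (0 : ℝ) 1, C * δ ≤ ε := by
  refine ⟨min 1 (ε / (|C| + 1)), ⟨lt_min one_pos (by positivity), min_le_left _ _⟩, ?_⟩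
  calc C * min 1 (ε / (|C| + 1)) ≤ |C| * (ε / (|C| + 1)) :=
        mul_le_mul (le_abs_self C) (min_le_right _ _) (by positivity) (abs_nonneg C)
    _ ≤ ε := by
        rw [← mul_div_assoc, div_le_iff₀ (by positivity)]; nlinarith [abs_nonneg C]

theorem div_mul_add_sqrt_div_eq_mul_rpow {s : ℝ} (hs : 0 < s) {a b c δ : ℝ} (hb : 0 ≤ b)
    (hc : 0 < c) (hδ : 0 < δ) :
    a / s * (δ * s ^ ((2 : ℝ) / 5)) +
        √(c * δ ^ 3 * b ^ 2 / ((δ * s ^ ((2 : ℝ) / 5)) ^ 3 * c)) =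
      (a * δ + b) * s ^ (-(3 : ℝ) / 5) := by
  set w := s ^ (-(3 : ℝ) / 5)
  have hw : 0 < w := by positivity
  have hu : s ^ ((2 : ℝ) / 5) = s * w := by
    rw [← Real.rpow_one_add' hs.le (by norm_num)]; norm_num
  have hsw : (s * w) ^ 3 * w ^ 2 = 1 := by
    rw [← hu, ← Real.rpow_natCast, ← Real.rpow_natCast, ← Real.rpow_mul hs.le,
      ← Real.rpow_mul hs.le, ← Real.rpow_add hs]
    norm_num
  have hsq : c * δ ^ 3 * b ^ 2 / ((δ * (s * w)) ^ 3 * c) = (b * w) ^ 2 := by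
    field_simp
    linear_combination -b ^ 2 * hsw
  rw [hu, hsq, Real.sqrt_sq (by positivity)]
  field_simp

theorem stmt8_general (v : ℝ → E3 → E3) (C₀ : ℝ)
    (hdiff : ∀ t ∈ Set.Ioo (-1 : ℝ) 0, DifferentiableOn ℝ (v t) (ball (0 : E3) 1))
    (hTypeI : ∀ t ∈ Set.Ioo (-1 : ℝ) 0, ∀ x ∈ ball (0 : E3) 1,
      (-t) * ‖fderivWithin ℝ (v t) (ball (0 : E3) 1) x‖ ≤ C₀)
    (hsmall : ∀ ε > (0 : ℝ), ∃ R ∈ Set.Ioc (0 : ℝ) (1 / 2),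
      ∀ y₀ ∈ ball (0 : E3) (1 / 2), ∀ t ∈ Set.Ioo (-(R ^ ((5 : ℝ) / 2))) 0,
        (∫ x in ball y₀ R, ‖v t x‖ ^ 2) ≤ ε) :
    ∀ ε > (0 : ℝ), ∃ t₀ ∈ Set.Ioo (-1 : ℝ) 0,
      ∀ t ∈ Set.Ico t₀ (0 : ℝ), ∀ x ∈ ball (0 : E3) (1 / 2),
        ‖v t x‖ ≤ ε * (-t) ^ (-(3 : ℝ) / 5) := by
  intro ε hε
  obtain ⟨δ, ⟨hδ, hδ₁⟩, hC₀δ⟩ := exists_mem_Ioc_zero_one_mul_le C₀ (half_pos hε)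
  set c := volume.real (ball (0 : E3) 1)
  have hc : 0 < c := ENNReal.toReal_pos (measure_ball_pos _ _ one_pos).ne' measure_ball_lt_top.ne
  obtain ⟨R, ⟨hR, hR'⟩, hsmallR⟩ := hsmall (c * δ ^ 3 * (ε / 2) ^ 2) (by positivity)
  have hRpow : 0 < R ^ ((5 : ℝ) / 2) := by positivity
  have hRpow' : R ^ ((5 : ℝ) / 2) ≤ 1 := Real.rpow_le_one hR.le (by linarith) (by norm_num)
  refine ⟨-(R ^ ((5 : ℝ) / 2) / 2), ⟨by linarith, by linarith⟩,
    fun t ⟨ht, ht'⟩ x hx ↦ ?_⟩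
  set s := -t
  have hs : 0 < s := neg_pos.2 ht'
  have hsR : s ^ ((2 : ℝ) / 5) < R := by
    rw [show (2 : ℝ) / 5 = (5 / 2)⁻¹ by norm_num,
      Real.rpow_inv_lt_iff_of_pos hs.le hR.le (by norm_num)]
    linarith
  have hr : 0 < δ * s ^ ((2 : ℝ) / 5) := by positivity
  have hpointwise := norm_le_mul_add_sqrt_setIntegral_sq_div (convex_ball 0 1)
    (hdiff t ⟨by linarith, ht'⟩) (L := C₀ / s)
    (fun y hy ↦ (le_div_iff₀ hs).2 (by linarith [hTypeI t ⟨by linarith, ht'⟩ y hy])) hr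
    ((mul_le_of_le_one_left (by positivity) hδ₁).trans hsR.le)
    (closedBall_subset_ball' (by rw [dist_zero_right]; linarith [mem_ball_zero_iff.1 hx]))
    (hsmallR x hx t ⟨by linarith, ht'⟩)
  rw [← Measure.addHaar_real_closedBall_eq_addHaar_real_ball,
    Measure.addHaar_real_closedBall _ _ hr.le, finrank_euclideanSpace_fin,
    div_mul_add_sqrt_div_eq_mul_rpow hs (by positivity) hc hδ] at hpointwise
  exact hpointwise.trans (by gcongr; linarith)

/-- Under the Type I condition and uniform smallness of the local energy, the `L^∞` norm of
the velocity satisfies `‖v(t)‖_{L^∞(B(1/2))} ≤ ε(-t)^{-3/5}` for `t` close to `0`. -/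
theorem stmt8 (v : ℝ → E3 → E3) (C₀ E : ℝ) (hC₀ : 0 ≤ C₀)
    (hdiff : ∀ t ∈ Set.Ioo (-1 : ℝ) 0, DifferentiableOn ℝ (v t) (ball (0 : E3) 1))
    (hL2 : ∀ t ∈ Set.Ioo (-1 : ℝ) 0, (∫ x in ball (0 : E3) 1, ‖v t x‖ ^ 2) ≤ E)
    (hTypeI : ∀ t ∈ Set.Ioo (-1 : ℝ) 0, ∀ x ∈ ball (0 : E3) 1,
      (-t) * ‖fderivWithin ℝ (v t) (ball (0 : E3) 1) x‖ ≤ C₀)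
    (hsmall : ∀ ε > (0 : ℝ), ∃ R ∈ Set.Ioc (0 : ℝ) (1 / 2),
      ∀ y₀ ∈ ball (0 : E3) (1 / 2), ∀ t ∈ Set.Ioo (-(R ^ ((5 : ℝ) / 2))) 0,
        (∫ x in ball y₀ R, ‖v t x‖ ^ 2) ≤ ε) :
    ∀ ε > (0 : ℝ), ∃ t₀ ∈ Set.Ioo (-1 : ℝ) 0,
      ∀ t ∈ Set.Ico t₀ (0 : ℝ), ∀ x ∈ ball (0 : E3) (1 / 2),
        ‖v t x‖ ≤ ε * (-t) ^ (-(3 : ℝ) / 5) :=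
  stmt8_general v C₀ hdiff hTypeI hsmall
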